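/- Let x : [a,b] → ℝⁿ belong to W²₂ (x and x' absolutely continuous, x'' ∈ L²) and let L ∈ C¹([a,b] × ℝ^{3n}, ℝ). Let s(t) = ∫_a^t √(1 + |x'(τ)|²) dτ, l = s(b), let t(s) be the inverse of s(t), and X(s) = x(t(s)). Then the change-of-variables identity holds: ∫_a^b L(t, x(t), x'(t), x''(t)) dt = ∫₀^l L(t(s), X(s), X'(s)/t'(s), X''(s)/t'(s)² − (t''(s)/t'(s)³)·X'(s)) · t'(s) ds. -/

import Mathlib

/-!
Write `h` for the right-hand integrand and change variables by `s = σ t`: `σ` is `C¹` on `[a, b]`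
with `σ' = √(1 + ‖x'‖²) ≥ 1`, so `∫₀ˡ h = ∫ₐᵇ σ' • (h ∘ σ)`. At `s = σ t`, differentiating
`T ∘ σ = id`, `X = x ∘ T` and `X' = T' • (x' ∘ T)` gives `T' s * σ' t = 1`, `X' s = T' s • x' t`
and `X'' s = T'' s • x' t + T' s ^ 2 • x'' t`, so that `σ' t * h s = L (t, x t, x' t, x'' t)`.
This holds for a.e. `t`: the hypotheses hold for a.e. `s`, and they transfer to a.e. `t` because
`T` is `1`-Lipschitz and so maps null sets to null sets. The identity `X' = T' • (x' ∘ T)` holds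
only a.e., which suffices because two functions that agree a.e. near a point and are
differentiable there have the same derivative.
-/

open MeasureTheory Set

/-- Euclidean space ℝⁿ. -/
abbrev Evec (n : ℕ) := EuclideanSpace ℝ (Fin n)

/-- `(x, x', x'')` is a derivative chain of class `W²₂` on `[a,b]`:
`x` and `x'` are absolutely continuous (encoded via the fundamental theorem of
calculus) and `x'' ∈ L²([a,b])`. -/
def MemW22 (n : ℕ) (a b : ℝ) (x x' x'' : ℝ → Evec n) : Prop :=
  (IntervalIntegrable x' volume a b ∧ ∀ t ∈ Icc a b, x t = x a + ∫ τ in a..t, x' τ) ∧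
  (IntervalIntegrable x'' volume a b ∧ ∀ t ∈ Icc a b, x' t = x' a + ∫ τ in a..t, x'' τ) ∧
  MemLp x'' 2 (volume.restrict (Icc a b))

open Filter Topology

variable {E : Type*} [NormedAddCommGroup E] [NormedSpace ℝ E]

section FundamentalTheorem

variable {f f' : ℝ → E} {a b : ℝ}

theorem continuousOn_of_forall_eq_add_integral (hab : a ≤ b)
    (hf' : IntervalIntegrable f' volume a b) (hf : ∀ t ∈ Icc a b, f t = f a + ∫ τ in a..t, f' τ) :
    ContinuousOn f (Icc a b) := by
  have h := intervalIntegral.continuousOn_primitive_interval' hf' left_mem_uIcc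
  rw [uIcc_of_le hab] at h
  exact (continuousOn_const.add h).congr hf

theorem hasDerivAt_of_forall_eq_add_integral [CompleteSpace E] (hf' : ContinuousOn f' (Icc a b))
    (hf : ∀ t ∈ Icc a b, f t = f a + ∫ τ in a..t, f' τ) {t : ℝ} (ht : t ∈ Ioo a b) :
    HasDerivAt f (f' t) t := by
  have hprim : HasDerivAt (fun u => ∫ τ in a..u, f' τ) (f' t) t :=
    intervalIntegral.integral_hasDerivAt_right
      ((hf'.mono (uIcc_of_le ht.1.le ▸ Icc_subset_Icc_right ht.2.le)).intervalIntegrable)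
      ((hf'.mono Ioo_subset_Icc_self).stronglyMeasurableAtFilter isOpen_Ioo t ht)
      ((hf'.mono Ioo_subset_Icc_self).continuousAt (Ioo_mem_nhds ht.1 ht.2))
  exact (hprim.const_add (f a)).congr_of_eventuallyEq
    (eventuallyEq_of_mem (Icc_mem_nhds ht.1 ht.2) hf)

theorem ae_hasDerivAt_of_forall_eq_add_integral [CompleteSpace E]
    (hf' : IntervalIntegrable f' volume a b)
    (hf : ∀ t ∈ Icc a b, f t = f a + ∫ τ in a..t, f' τ) :
    ∀ᵐ t ∂volume.restrict (Ioo a b), HasDerivAt f (f' t) t := by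
  filter_upwards [ae_restrict_of_ae hf'.ae_hasDerivAt_integral,
    ae_restrict_mem measurableSet_Ioo] with t hprim ht
  exact ((hprim (Icc_subset_uIcc (Ioo_subset_Icc_self ht)) a left_mem_uIcc).const_add
    (f a)).congr_of_eventuallyEq (eventuallyEq_of_mem (Icc_mem_nhds ht.1 ht.2) hf)

end FundamentalTheorem

theorem HasDerivAt.unique_of_ae_eq {f g : ℝ → E} {f' g' : E} {x : ℝ} {U : Set ℝ}
    (hf : HasDerivAt f f' x) (hg : HasDerivAt g g' x) (hU : U ∈ 𝓝 x)
    (hfg : ∀ᵐ y, y ∈ U → f y = g y) : f' = g' := by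
  set D := {y | y ∈ U → f y = g y}
  have hacc : AccPt x (𝓟 D) := by
    rw [accPt_iff_nhds]
    intro V hV
    obtain ⟨y, hyV, hyD, hyx⟩ :=
      mem_closure_iff_nhds.1 (((Measure.dense_of_ae hfg).sdiff_singleton x).closure_eq ▸
        mem_univ x) V hV
    exact ⟨y, ⟨hyV, hyD⟩, hyx⟩
  have hfgD : f =ᶠ[𝓝[D] x] g := by
    filter_upwards [self_mem_nhdsWithin, mem_nhdsWithin_of_mem_nhds hU] with y hyD hyU
      using hyD hyU
  have hx : f x = g x := by
    have : (𝓝[D] x).NeBot := hacc.clusterPt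
    exact tendsto_nhds_unique ((hf.continuousAt.tendsto.mono_left nhdsWithin_le_nhds).congr' hfgD)
      (hg.continuousAt.tendsto.mono_left nhdsWithin_le_nhds)
  exact hacc.uniqueDiffWithinAt.eq_deriv D hf.hasDerivWithinAt
    (hg.hasDerivWithinAt.congr_of_eventuallyEq hfgD hx)

theorem LipschitzOnWith.volume_image_null {K : NNReal} {f : ℝ → ℝ} {s : Set ℝ}
    (hf : LipschitzOnWith K f s) (hs : volume s = 0) : volume (f '' s) = 0 := by
  rw [← hausdorffMeasure_real] at hs ⊢
  refine le_antisymm ((hf.hausdorffMeasure_image_le zero_le_one).trans ?_) zero_le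
  rw [hs, mul_zero]

theorem ae_restrict_comp_of_lipschitzOnWith_leftInvOn {f g : ℝ → ℝ} {s t : Set ℝ} {K : NNReal}
    (hs : MeasurableSet s) (ht : MeasurableSet t) (hg : LipschitzOnWith K g t)
    (hf : MapsTo f s t) (hgf : LeftInvOn g f s) {p : ℝ → Prop}
    (h : ∀ᵐ y ∂volume.restrict t, p y) : ∀ᵐ x ∂volume.restrict s, p (f x) := by
  rw [ae_restrict_iff' ht, ae_iff] at h
  rw [ae_restrict_iff' hs, ae_iff]
  refine measure_mono_null (fun x hx => ?_)
    ((hg.mono fun y hy => (Classical.not_imp.1 hy).1).volume_image_null h)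
  obtain ⟨hx, hpx⟩ := Classical.not_imp.1 hx
  exact ⟨f x, fun h => hpx (h (hf hx)), hgf hx⟩

theorem HasDerivAt.mul_eq_one_of_leftInverse {f g : ℝ → ℝ} {f' g' x : ℝ}
    (hf : HasDerivAt f f' x) (hg : HasDerivAt g g' (f x)) (hgf : ∀ᶠ y in 𝓝 x, g (f y) = y) :
    g' * f' = 1 :=
  ((hg.comp x hf).congr_of_eventuallyEq (hgf.mono fun _ hy => hy.symm)).unique (hasDerivAt_id x)

theorem antilipschitzWith_domRestrict_of_one_le_deriv {f f' : ℝ → ℝ} {a b : ℝ}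
    (hf : ContinuousOn f (Icc a b)) (hf' : ∀ t ∈ Ioo a b, HasDerivAt f (f' t) t)
    (h1 : ∀ t ∈ Ioo a b, 1 ≤ f' t) : AntilipschitzWith 1 ((Icc a b).domRestrict f) := by
  have hgrowth := (convex_Icc a b).mul_sub_le_image_sub_of_le_deriv hf
    (by rw [interior_Icc]; exact fun t ht => (hf' t ht).differentiableAt.differentiableWithinAt)
    (by rw [interior_Icc]; exact fun t ht => (hf' t ht).deriv ▸ h1 t ht)
  refine AntilipschitzWith.of_le_mul_dist fun p q => ?_
  rw [NNReal.coe_one, one_mul, Subtype.dist_eq, domRestrict_apply, domRestrict_apply,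
    Real.dist_eq, Real.dist_eq]
  rcases le_total p.1 q.1 with hpq | hqp
  · have := hgrowth p p.2 q q.2 hpq
    rw [abs_of_nonpos (by linarith), abs_of_nonpos (by linarith)]
    linarith
  · have := hgrowth q q.2 p p.2 hqp
    rw [abs_of_nonneg (by linarith), abs_of_nonneg (by linarith)]
    linarith

section Inverse

variable {σ T : ℝ → ℝ} {a b : ℝ}

theorem rightInvOn_Icc_of_leftInvOn (hab : a ≤ b) (hσ : ContinuousOn σ (Icc a b))
    (hTσ : LeftInvOn T σ (Icc a b)) : RightInvOn T σ (Icc (σ a) (σ b)) :=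
  hTσ.rightInvOn_image.mono (intermediate_value_Icc hab hσ)

theorem mapsTo_Ioo_of_rightInvOn (hT : MapsTo T (Icc (σ a) (σ b)) (Icc a b))
    (hσT : RightInvOn T σ (Icc (σ a) (σ b))) : MapsTo T (Ioo (σ a) (σ b)) (Ioo a b) := by
  intro s hs
  have hσTs := hσT (Ioo_subset_Icc_self hs)
  obtain ⟨ha, hb⟩ := hT (Ioo_subset_Icc_self hs)
  refine ⟨ha.lt_of_ne ?_, hb.lt_of_ne ?_⟩ <;> rintro rfl
  · exact hs.1.ne hσTs
  · exact hs.2.ne' hσTs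

end Inverse

theorem ae_eq_smul_comp_of_hasDerivAt {φ φ' : ℝ → ℝ} {y y' Y Y' : ℝ → E} {U : Set ℝ}
    (hU : IsOpen U) (hY : ∀ u ∈ U, Y u = y (φ u))
    (hy : ∀ u ∈ U, HasDerivAt y (y' (φ u)) (φ u))
    (hφ : ∀ᵐ u ∂volume.restrict U, HasDerivAt φ (φ' u) u)
    (hY' : ∀ᵐ u ∂volume.restrict U, HasDerivAt Y (Y' u) u) :
    ∀ᵐ u ∂volume.restrict U, Y' u = φ' u • y' (φ u) := by
  filter_upwards [hφ, hY', ae_restrict_mem hU.measurableSet] with u hφu hYu hu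
  exact hYu.unique (((hy u hu).scomp u hφu).congr_of_eventuallyEq
    (eventuallyEq_of_mem (hU.mem_nhds hu) hY))

theorem eq_of_hasDerivAt_of_ae_eq_smul_comp {φ φ' : ℝ → ℝ} {y' Y' : ℝ → E} {s φ'' : ℝ}
    {y'' Y'' : E} {U : Set ℝ} (hφ : HasDerivAt φ (φ' s) s) (hφ' : HasDerivAt φ' φ'' s)
    (hy' : HasDerivAt y' y'' (φ s)) (hY' : HasDerivAt Y' Y'' s) (hU : U ∈ 𝓝 s)
    (hY'y' : ∀ᵐ u, u ∈ U → Y' u = φ' u • y' (φ u)) :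
    Y'' = φ'' • y' (φ s) + φ' s ^ 2 • y'' := by
  rw [hY'.unique_of_ae_eq (hφ'.smul (hy'.scomp s hφ)) hU hY'y', smul_smul, add_comm, sq,
    Function.comp_apply]

theorem inv_sq_smul_sub_eq {c d : ℝ} (hc : c ≠ 0) (v w : E) :
    (c ^ 2)⁻¹ • (d • v + c ^ 2 • w) - (d / c ^ 3) • (c • v) = w := by
  match_scalars
  · field_simp
    ring
  · field_simp

theorem integral_eq_of_ae_smul_comp_eq {σ ρ : ℝ → ℝ} {g h : ℝ → E} {a b : ℝ} (hab : a ≤ b)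
    (hσ : ContinuousOn σ (Icc a b)) (hσ' : ∀ t ∈ Ioo a b, HasDerivAt σ (ρ t) t)
    (hρ : ∀ t ∈ Ioo a b, 0 ≤ ρ t) (hgh : ∀ᵐ t ∂volume.restrict (Ioo a b), ρ t • h (σ t) = g t) :
    ∫ t in a..b, g t = ∫ s in σ a..σ b, h s := by
  have hσmono : MonotoneOn σ (Icc a b) := monotoneOn_of_deriv_nonneg (convex_Icc a b) hσ
    (by rw [interior_Icc]; exact fun t ht => (hσ' t ht).differentiableAt.differentiableWithinAt)
    (by rw [interior_Icc]; exact fun t ht => (hσ' t ht).deriv ▸ hρ t ht)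
  rw [intervalIntegral.integral_of_le hab, intervalIntegral.integral_of_le
    (hσmono (left_mem_Icc.2 hab) (right_mem_Icc.2 hab) hab), ← integral_Icc_eq_integral_Ioc,
    ← integral_Icc_eq_integral_Ioc, ← integral_Icc_deriv_smul_of_deriv_nonneg hσ hσ' hρ hab,
    ← Measure.restrict_congr_set (Ioo_ae_eq_Icc (μ := volume) (a := a) (b := b))]
  exact integral_congr_ae (hgh.mono fun t ht => ht.symm)

theorem ae_reparam_integrand_eq (L : ℝ × E × E × E → ℝ) {x x' x'' X X' X'' : ℝ → E}
    {σ ρ T T' T'' : ℝ → ℝ} {U V : Set ℝ} {K : NNReal} (hU : IsOpen U) (hV : IsOpen V)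
    (hσ : ∀ t ∈ U, HasDerivAt σ (ρ t) t) (hσU : MapsTo σ U V) (hTσ : LeftInvOn T σ U)
    (hT : LipschitzOnWith K T V) (hTV : MapsTo T V U)
    (hx : ∀ t ∈ U, HasDerivAt x (x' t) t) (hx' : ∀ᵐ t ∂volume.restrict U, HasDerivAt x' (x'' t) t)
    (hT' : ∀ᵐ s ∂volume.restrict V, HasDerivAt T (T' s) s)
    (hT'' : ∀ᵐ s ∂volume.restrict V, HasDerivAt T' (T'' s) s)
    (hX : ∀ s ∈ V, X s = x (T s)) (hX' : ∀ᵐ s ∂volume.restrict V, HasDerivAt X (X' s) s)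
    (hX'' : ∀ᵐ s ∂volume.restrict V, HasDerivAt X' (X'' s) s) :
    ∀ᵐ t ∂volume.restrict U,
      ρ t * (L (T (σ t), X (σ t), (T' (σ t))⁻¹ • X' (σ t),
          (T' (σ t) ^ 2)⁻¹ • X'' (σ t) - (T'' (σ t) / T' (σ t) ^ 3) • X' (σ t)) * T' (σ t)) =
        L (t, x t, x' t, x'' t) := by
  have pull {p : ℝ → Prop} (h : ∀ᵐ s ∂volume.restrict V, p s) :
      ∀ᵐ t ∂volume.restrict U, p (σ t) :=
    ae_restrict_comp_of_lipschitzOnWith_leftInvOn hU.measurableSet hV.measurableSet hT hσU hTσ h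
  have hX'eq := ae_eq_smul_comp_of_hasDerivAt hV hX (fun s hs => hx _ (hTV hs)) hT' hX'
  filter_upwards [pull hT', pull hT'', pull hX'', pull hX'eq, hx',
    ae_restrict_mem hU.measurableSet] with t hT't hT''t hX''t hX't hx't ht
  have hTt : T (σ t) = t := hTσ ht
  have hρ : T' (σ t) * ρ t = 1 :=
    (hσ t ht).mul_eq_one_of_leftInverse hT't (eventually_of_mem (hU.mem_nhds ht) hTσ)
  have hX''t' := eq_of_hasDerivAt_of_ae_eq_smul_comp hT't hT''t (by rwa [hTt]) hX''t
    (hV.mem_nhds (hσU ht)) ((ae_restrict_iff' hV.measurableSet).1 hX'eq)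
  have hc : T' (σ t) ≠ 0 := left_ne_zero_of_mul_eq_one hρ
  rw [hX _ (hσU ht), hX't, hX''t', hTt, inv_smul_smul₀ hc, inv_sq_smul_sub_eq hc]
  linear_combination L (t, x t, x' t, x'' t) * hρ

theorem change_of_variables_arclength_second_order_general
    (n : ℕ) (a b : ℝ) (hab : a < b)
    (L : ℝ × Evec n × Evec n × Evec n → ℝ)
    (x x' x'' : ℝ → Evec n) (hW : MemW22 n a b x x' x'')
    -- arc-length reparameterization
    (σ : ℝ → ℝ) (hσ : σ = fun t => ∫ τ in a..t, Real.sqrt (1 + ‖x' τ‖ ^ 2))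
    (l : ℝ) (hl : l = σ b)
    (T : ℝ → ℝ) (hTinv : ∀ t ∈ Icc a b, T (σ t) = t) (hTmem : ∀ s ∈ Icc 0 l, T s ∈ Icc a b)
    (T' T'' : ℝ → ℝ)
    (hT' : ∀ᵐ s ∂volume.restrict (Icc 0 l), HasDerivAt T (T' s) s)
    (hT'' : ∀ᵐ s ∂volume.restrict (Icc 0 l), HasDerivAt T' (T'' s) s)
    (X : ℝ → Evec n) (hX : ∀ s ∈ Icc 0 l, X s = x (T s))
    (X' X'' : ℝ → Evec n)
    (hX' : ∀ᵐ s ∂volume.restrict (Icc 0 l), HasDerivAt X (X' s) s)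
    (hX'' : ∀ᵐ s ∂volume.restrict (Icc 0 l), HasDerivAt X' (X'' s) s) :
    ∫ t in a..b, L (t, x t, x' t, x'' t) =
      ∫ s in (0:ℝ)..l,
        L (T s, X s, (T' s)⁻¹ • X' s,
            (T' s ^ 2)⁻¹ • X'' s - (T'' s / T' s ^ 3) • X' s) * T' s := by
  obtain ⟨⟨-, hxF⟩, ⟨hx''i, hx'F⟩, -⟩ := hW
  have hx'c := continuousOn_of_forall_eq_add_integral hab.le hx''i hx'F
  set ρ : ℝ → ℝ := fun t => √(1 + ‖x' t‖ ^ 2)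
  have hρ1 (t : ℝ) : 1 ≤ ρ t := Real.one_le_sqrt.2 (le_add_of_nonneg_right (sq_nonneg _))
  have hρc : ContinuousOn ρ (Icc a b) := (continuousOn_const.add (hx'c.norm.pow 2)).sqrt
  have hσa : σ a = 0 := by simp [hσ]
  have hσF : ∀ t ∈ Icc a b, σ t = σ a + ∫ τ in a..t, ρ τ := by simp [hσ, ρ]
  have hσc :=
    continuousOn_of_forall_eq_add_integral hab.le (hρc.intervalIntegrable_of_Icc hab.le) hσF
  have hσ' (t : ℝ) : t ∈ Ioo a b → HasDerivAt σ (ρ t) t :=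
    hasDerivAt_of_forall_eq_add_integral hρc hσF
  have hσmono : StrictMonoOn σ (Icc a b) := strictMonoOn_of_deriv_pos (convex_Icc a b) hσc
    (by rw [interior_Icc]; exact fun t ht => (hσ' t ht).deriv ▸ zero_lt_one.trans_le (hρ1 t))
  rw [← hσa, hl] at hTmem hT' hT'' hX hX' hX'' ⊢
  have hσT := rightInvOn_Icc_of_leftInvOn hab.le hσc hTinv
  have hTlip : LipschitzOnWith 1 T (Icc (σ a) (σ b)) := lipschitzOnWith_iff_restrict.2
    ((antilipschitzWith_domRestrict_of_one_le_deriv hσc hσ' fun t _ => hρ1 t).to_rightInvOn'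
      hTmem hσT)
  have hσIoo : MapsTo σ (Ioo a b) (Ioo (σ a) (σ b)) := fun t ht =>
    ⟨hσmono (left_mem_Icc.2 hab.le) (Ioo_subset_Icc_self ht) ht.1,
      hσmono (Ioo_subset_Icc_self ht) (right_mem_Icc.2 hab.le) ht.2⟩
  have hIoo := Measure.restrict_congr_set (Ioo_ae_eq_Icc (μ := volume) (a := σ a) (b := σ b))
  refine integral_eq_of_ae_smul_comp_eq hab.le hσc hσ' (fun t _ => zero_le_one.trans (hρ1 t)) ?_
  exact ae_reparam_integrand_eq L isOpen_Ioo isOpen_Ioo hσ' hσIoo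
    (LeftInvOn.mono hTinv Ioo_subset_Icc_self) (hTlip.mono Ioo_subset_Icc_self)
    (mapsTo_Ioo_of_rightInvOn hTmem hσT) (fun t => hasDerivAt_of_forall_eq_add_integral hx'c hxF)
    (ae_hasDerivAt_of_forall_eq_add_integral hx''i hx'F) (hIoo ▸ hT') (hIoo ▸ hT'')
    (fun s hs => hX s (Ioo_subset_Icc_self hs)) (hIoo ▸ hX') (hIoo ▸ hX'')

/-- the change-of-variables identity for the second-order functional under
the arc-length reparameterization `t = t(s)`, `X(s) = x(t(s))`. -/
theorem change_of_variables_arclength_second_order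
    (n : ℕ) (hn : 1 ≤ n) (a b : ℝ) (hab : a < b)
    (L : ℝ × Evec n × Evec n × Evec n → ℝ) (hLC1 : ContDiff ℝ 1 L)
    (x x' x'' : ℝ → Evec n) (hW : MemW22 n a b x x' x'')
    -- arc-length reparameterization
    (σ : ℝ → ℝ) (hσ : σ = fun t => ∫ τ in a..t, Real.sqrt (1 + ‖x' τ‖ ^ 2))
    (l : ℝ) (hl : l = σ b)
    (T : ℝ → ℝ) (hTinv : ∀ t ∈ Icc a b, T (σ t) = t) (hTmem : ∀ s ∈ Icc 0 l, T s ∈ Icc a b)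
    (T' T'' : ℝ → ℝ)
    (hT' : ∀ᵐ s ∂volume.restrict (Icc 0 l), HasDerivAt T (T' s) s)
    (hT'' : ∀ᵐ s ∂volume.restrict (Icc 0 l), HasDerivAt T' (T'' s) s)
    (X : ℝ → Evec n) (hX : ∀ s ∈ Icc 0 l, X s = x (T s))
    (X' X'' : ℝ → Evec n)
    (hX' : ∀ᵐ s ∂volume.restrict (Icc 0 l), HasDerivAt X (X' s) s)
    (hX'' : ∀ᵐ s ∂volume.restrict (Icc 0 l), HasDerivAt X' (X'' s) s) :
    ∫ t in a..b, L (t, x t, x' t, x'' t) =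
      ∫ s in (0:ℝ)..l,
        L (T s, X s, (T' s)⁻¹ • X' s,
            (T' s ^ 2)⁻¹ • X'' s - (T'' s / T' s ^ 3) • X' s) * T' s :=
  change_of_variables_arclength_second_order_general n a b hab L x x' x'' hW σ hσ l hl T hTinv hTmem
    T' T'' hT' hT'' X hX X' X'' hX' hX''
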